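/- Let G be a totally disconnected, locally compact Hausdorff topological group and α a tidy bicontinuous automorphism of G, and let V be a compact open subgroup of G tidy for α. Then V_{--} = ⋃_{n≥0} α^{-n}(V_-) is a closed subgroup of G with α(V_{--}) = V_{--} and V_{--} ⊆ P_α, and for every compact open subgroup W of the topological group V_{--} that is tidy for the restriction of α^{-1} to V_{--}, setting W' = ⋂_{n≥0} α^{-n}(W), the indices [α^{-1}(V_-) : V_-] and [α^{-1}(W') : W'] are finite and equal. (This expresses the scale identity s_G(α^{-1}) = s_{V_{--}}(α^{-1}|_{V_{--}}).) -/

import Mathlib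

open Filter Topology Set Pointwise MeasureTheory
open scoped ENNReal

variable {G : Type*} [Group G] [TopologicalSpace G] [IsTopologicalGroup G]

/-- `V₊ = ⋂ n ≥ 0, α^n(V)`. -/
def posPart (α : MulAut G) (V : Set G) : Set G := ⋂ n : ℕ, ⇑(α ^ n) '' V

/-- `V₋ = ⋂ n ≥ 0, α^{-n}(V)`. -/
def negPart (α : MulAut G) (V : Set G) : Set G := ⋂ n : ℕ, ⇑(α⁻¹ ^ n) '' V

/-- `V₊₊ = ⋃ n ≥ 0, α^n(V₊)`. -/
def ppPart (α : MulAut G) (V : Set G) : Set G := ⋃ n : ℕ, ⇑(α ^ n) '' posPart α V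

/-- `V₋₋ = ⋃ n ≥ 0, α^{-n}(V₋)`. -/
def mmPart (α : MulAut G) (V : Set G) : Set G := ⋃ n : ℕ, ⇑(α⁻¹ ^ n) '' negPart α V

/-- A compact open subgroup `V ⊆ G` is tidy for `α` if (T1) `V = V₊V₋` and
(T2) `V₊₊` and `V₋₋` are closed in `G`. -/
def IsTidyFor (α : MulAut G) (V : Subgroup G) : Prop :=
  IsCompact (V : Set G) ∧ IsOpen (V : Set G) ∧
  (V : Set G) = posPart α (V : Set G) * negPart α (V : Set G) ∧
  IsClosed (ppPart α (V : Set G)) ∧ IsClosed (mmPart α (V : Set G))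

/-- `α` is tidy if every identity neighbourhood of `G` contains a compact open
subgroup of `G` tidy for `α`. -/
def IsTidy (α : MulAut G) : Prop :=
  ∀ U ∈ 𝓝 (1 : G), ∃ V : Subgroup G, IsTidyFor α V ∧ (V : Set G) ⊆ U

/-- The contraction group `U_α = {x : α^n(x) → 1}`. -/
def contractionGroup (α : MulAut G) : Set G :=
  {x : G | Tendsto (fun n : ℕ => (α ^ n) x) atTop (𝓝 1)}

/-- `P_α = {x : {α^n(x), n ∈ ℕ} relatively compact}`. -/
def parSet (α : MulAut G) : Set G :=
  {x : G | IsCompact (closure (Set.range fun n : ℕ => (α ^ n) x))}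

/-- `M_α = {x : {α^n(x), n ∈ ℤ} relatively compact}`. -/
def levSet (α : MulAut G) : Set G :=
  {x : G | IsCompact (closure (Set.range fun n : ℤ => (α ^ n) x))}

/-- A subgroup `V` of `G` contained in an `α`-stable subset `M ⊆ G` is a compact
open subgroup of the topological group `M` tidy for the restriction `α|_M`
(openness and closedness of `V`, `V₊₊`, `V₋₋` being relative to `M`). -/
def IsTidyForIn (α : MulAut G) (M : Set G) (V : Subgroup G) : Prop :=
  (V : Set G) ⊆ M ∧ IsCompact (V : Set G) ∧
  IsOpen ((Subtype.val ⁻¹' (V : Set G)) : Set M) ∧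
  (V : Set G) = posPart α (V : Set G) * negPart α (V : Set G) ∧
  IsClosed ((Subtype.val ⁻¹' ppPart α (V : Set G)) : Set M) ∧
  IsClosed ((Subtype.val ⁻¹' mmPart α (V : Set G)) : Set M)

/-- The restriction `α|_M` is tidy: every identity neighbourhood of the topological
group `M` contains a compact open subgroup of `M` tidy for `α|_M`. -/
def IsTidyOn (α : MulAut G) (M : Set G) : Prop :=
  ∀ U ∈ 𝓝 (1 : G), ∃ V : Subgroup G, IsTidyForIn α M V ∧ (V : Set G) ⊆ U

/-- `U_{α/H}`: the set of `x ∈ G` with `α^n(x) → 1` modulo `H`. -/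
def relContraction (α : MulAut G) (H : Set G) : Set G :=
  {x : G | ∀ V ∈ 𝓝 (1 : G), ∃ N : ℕ, ∀ n ≥ N, (α ^ n) x ∈ V * H}

/-- The set `K`: the intersection, over all compact open subgroups `O` of `G`, of the
closures of `{x ∈ M_α : α^n(x) ∈ O for all sufficiently large n}`. -/
def KSet (α : MulAut G) : Set G :=
  ⋂ O ∈ {O : Subgroup G | IsCompact (O : Set G) ∧ IsOpen (O : Set G)},
    closure {x ∈ levSet α | ∃ N : ℕ, ∀ n ≥ N, (α ^ n) x ∈ O}

/-- `V₋ = ⋂ n ≥ 0, α^{-n}(V)` as a subgroup. -/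
def negSubgroup (α : MulAut G) (V : Subgroup G) : Subgroup G :=
  ⨅ n : ℕ, V.map ((α⁻¹ ^ n : MulAut G) : G →* G)

/-- The index `[α^{-1}(H) : H]` of a subgroup `H` in `α^{-1}(H)` (equal to `0` if
this index is infinite). -/
noncomputable def idx (α : MulAut G) (H : Subgroup G) : ℕ :=
  H.relIndex (H.map ((α⁻¹ : MulAut G) : G →* G))

set_option linter.unusedSectionVars false
set_option linter.unusedVariables false

section Helpers
variable {H : Type*} [Group H]

lemma mem_image_mulAut (e : MulAut H) {s : Set H} {x : H} : x ∈ ⇑e '' s ↔ e⁻¹ x ∈ s := by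
  constructor
  · rintro ⟨y, hy, rfl⟩; simpa [MulAut.inv_apply_self] using hy
  · intro h; exact ⟨e⁻¹ x, h, by simp⟩

lemma mem_posPart {α : MulAut H} {S : Set H} {x : H} :
    x ∈ posPart α S ↔ ∀ n : ℕ, (α⁻¹ ^ n) x ∈ S := by
  simp only [_root_.posPart, Set.mem_iInter]
  refine forall_congr' fun n => ?_
  rw [mem_image_mulAut, ← inv_pow]

lemma mem_negPart {α : MulAut H} {S : Set H} {x : H} :
    x ∈ negPart α S ↔ ∀ n : ℕ, (α ^ n) x ∈ S := by
  simp only [_root_.negPart, Set.mem_iInter]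
  refine forall_congr' fun n => ?_
  rw [mem_image_mulAut, ← inv_pow, inv_inv]

lemma pow_apply_add (α : MulAut H) (m n : ℕ) (x : H) :
    (α ^ m) ((α ^ n) x) = (α ^ (m + n)) x := by
  rw [pow_add]; rfl

lemma mem_mmPart {α : MulAut H} {S : Set H} {x : H} :
    x ∈ mmPart α S ↔ ∃ n : ℕ, ∀ m : ℕ, n ≤ m → (α ^ m) x ∈ S := by
  simp only [mmPart, Set.mem_iUnion]
  constructor
  · rintro ⟨n, hn⟩
    rw [mem_image_mulAut, ← inv_pow, inv_inv, mem_negPart] at hn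
    refine ⟨n, fun m hm => ?_⟩
    have := hn (m - n)
    rwa [pow_apply_add, Nat.sub_add_cancel hm] at this
  · rintro ⟨n, hn⟩
    refine ⟨n, ?_⟩
    rw [mem_image_mulAut, ← inv_pow, inv_inv, mem_negPart]
    intro k
    rw [pow_apply_add]
    exact hn _ (Nat.le_add_left n k)

lemma mem_ppPart {α : MulAut H} {S : Set H} {x : H} :
    x ∈ ppPart α S ↔ ∃ n : ℕ, ∀ m : ℕ, n ≤ m → (α⁻¹ ^ m) x ∈ S := by
  simp only [ppPart, Set.mem_iUnion]
  constructor
  · rintro ⟨n, hn⟩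
    rw [mem_image_mulAut, ← inv_pow, mem_posPart] at hn
    refine ⟨n, fun m hm => ?_⟩
    have := hn (m - n)
    rwa [pow_apply_add, Nat.sub_add_cancel hm] at this
  · rintro ⟨n, hn⟩
    refine ⟨n, ?_⟩
    rw [mem_image_mulAut, ← inv_pow, mem_posPart]
    intro k
    rw [pow_apply_add]
    exact hn _ (Nat.le_add_left n k)

lemma posPart_inv (α : MulAut H) (S : Set H) : posPart α⁻¹ S = negPart α S := by
  ext x; rw [mem_posPart, mem_negPart]; simp [inv_inv]

lemma negPart_inv (α : MulAut H) (S : Set H) : negPart α⁻¹ S = posPart α S := by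
  ext x; rw [mem_negPart, mem_posPart]

lemma mmPart_inv (α : MulAut H) (S : Set H) : mmPart α⁻¹ S = ppPart α S := by
  ext x; rw [mem_mmPart, mem_ppPart]

end Helpers

section Helpers2
variable {H : Type*} [Group H]

lemma continuous_mulAut_pow [TopologicalSpace H] {ψ : MulAut H} (h : Continuous ⇑ψ) (n : ℕ) :
    Continuous ⇑(ψ ^ n) := by
  induction n with
  | zero => simpa [pow_zero] using continuous_id
  | succ k ih =>
    have : ⇑(ψ ^ (k + 1)) = ⇑(ψ ^ k) ∘ ⇑ψ := by
      ext x; rw [Function.comp_apply, ← MulAut.mul_apply, ← pow_succ]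
    rw [this]; exact ih.comp h

/-- subgroup version of `posPart`. -/
def posSubgroup (α : MulAut H) (V : Subgroup H) : Subgroup H :=
  ⨅ n : ℕ, V.map ((α ^ n : MulAut H) : H →* H)

lemma mem_map_mulAut {e : MulAut H} {V : Subgroup H} {x : H} :
    x ∈ V.map (e : H →* H) ↔ e⁻¹ x ∈ V := by
  constructor
  · rintro ⟨y, hy, rfl⟩
    simpa using hy
  · intro h
    exact ⟨e⁻¹ x, h, by simp⟩

lemma coe_map_mulAut (e : MulAut H) (V : Subgroup H) :
    (V.map (e : H →* H) : Set H) = ⇑e '' (V : Set H) := rfl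

lemma mem_negSubgroup {α : MulAut H} {V : Subgroup H} {x : H} :
    x ∈ negSubgroup α V ↔ ∀ n : ℕ, (α ^ n) x ∈ V := by
  simp only [negSubgroup, Subgroup.mem_iInf, mem_map_mulAut]
  refine forall_congr' fun n => ?_
  rw [← inv_pow, inv_inv]

lemma mem_posSubgroup {α : MulAut H} {V : Subgroup H} {x : H} :
    x ∈ posSubgroup α V ↔ ∀ n : ℕ, (α⁻¹ ^ n) x ∈ V := by
  simp only [posSubgroup, Subgroup.mem_iInf, mem_map_mulAut]
  refine forall_congr' fun n => ?_
  rw [← inv_pow]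

lemma coe_negSubgroup (α : MulAut H) (V : Subgroup H) :
    ((negSubgroup α V : Subgroup H) : Set H) = negPart α (V : Set H) := by
  ext x
  rw [SetLike.mem_coe, mem_negSubgroup, mem_negPart]; rfl

lemma coe_posSubgroup (α : MulAut H) (V : Subgroup H) :
    ((posSubgroup α V : Subgroup H) : Set H) = posPart α (V : Set H) := by
  ext x
  rw [SetLike.mem_coe, mem_posSubgroup, mem_posPart]; rfl

/-- `V₋₋` as a subgroup. -/
def mmSubgroup (α : MulAut H) (V : Subgroup H) : Subgroup H where
  carrier := mmPart α (V : Set H)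
  one_mem' := by
    rw [mem_mmPart]
    exact ⟨0, fun m _ => by simpa using V.one_mem⟩
  mul_mem' := by
    intro a b ha hb
    rw [mem_mmPart] at ha hb ⊢
    obtain ⟨n, hn⟩ := ha
    obtain ⟨k, hk⟩ := hb
    refine ⟨max n k, fun m hm => ?_⟩
    rw [map_mul]
    exact V.mul_mem (hn m (le_trans (le_max_left _ _) hm)) (hk m (le_trans (le_max_right _ _) hm))
  inv_mem' := by
    intro a ha
    rw [mem_mmPart] at ha ⊢
    obtain ⟨n, hn⟩ := ha
    refine ⟨n, fun m hm => ?_⟩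
    rw [map_inv]
    exact V.inv_mem (hn m hm)

lemma coe_mmSubgroup (α : MulAut H) (V : Subgroup H) :
    ((mmSubgroup α V : Subgroup H) : Set H) = mmPart α (V : Set H) := rfl

end Helpers2

section Helpers3
variable {H : Type*} [Group H]

lemma image_mulAut (e : MulAut H) (s : Set H) : ⇑e '' s = ⇑e⁻¹ ⁻¹' s := by
  ext x; rw [mem_image_mulAut, Set.mem_preimage]

variable [TopologicalSpace H] [IsTopologicalGroup H]

lemma isOpen_image_mulAut {e : MulAut H} (he : Continuous ⇑e⁻¹) {s : Set H} (hs : IsOpen s) :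
    IsOpen (⇑e '' s) := by
  rw [image_mulAut]; exact hs.preimage he

lemma isCompact_negPart [T2Space H] {α : MulAut H} (hc' : Continuous ⇑α⁻¹)
    {V : Set H} (hV : IsCompact V) : IsCompact (negPart α V) := by
  have hcl : IsClosed (negPart α V) := by
    refine isClosed_iInter fun n => ?_
    exact (hV.image (continuous_mulAut_pow hc' n)).isClosed
  refine IsCompact.of_isClosed_subset hV hcl ?_
  intro x hx
  have := mem_negPart.mp hx 0
  simpa using this

lemma isCompact_posPart [T2Space H] {α : MulAut H} (hc : Continuous ⇑α)
    {V : Set H} (hV : IsCompact V) : IsCompact (posPart α V) := by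
  have hcl : IsClosed (posPart α V) := by
    refine isClosed_iInter fun n => ?_
    exact (hV.image (continuous_mulAut_pow hc n)).isClosed
  refine IsCompact.of_isClosed_subset hV hcl ?_
  intro x hx
  have := mem_posPart.mp hx 0
  simpa using this

/-- If `H` is a compact subgroup and `K` a subgroup containing a relatively open
neighbourhood of `1` in `H`, then `K` has finite index in `H`. -/
lemma relindex_ne_zero_of_compact {K N : Subgroup H} (hN : IsCompact (N : Set H))
    {O : Set H} (hO : IsOpen O) (h1 : (1 : H) ∈ O) (hsub : O ∩ N ⊆ K) :
    K.relIndex N ≠ 0 := by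
  haveI : CompactSpace N := isCompact_iff_compactSpace.mp hN
  have hU : IsOpen ((K.subgroupOf N : Subgroup N) : Set N) := by
    apply Subgroup.isOpen_of_mem_nhds (g := (1 : N))
    refine Filter.mem_of_superset
      ((hO.preimage continuous_subtype_val).mem_nhds (by exact h1)) ?_
    intro u hu
    exact Subgroup.mem_subgroupOf.mpr (hsub ⟨hu, u.2⟩)
  haveI := Subgroup.quotient_finite_of_isOpen (K.subgroupOf N) hU
  rw [Subgroup.relIndex]
  exact Subgroup.index_ne_zero_of_finite

variable [T2Space H] [LocallyCompactSpace H]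

/-- Baire-category argument: if a closed subgroup `S` is covered by the iterated
images under `ψ` of a compact subgroup `D ≤ S`, then `D` is relatively open in `S`. -/
lemma exists_isOpen_inter_subset {S D : Subgroup H} (ψ : MulAut H)
    (hψ : Continuous ⇑ψ) (hψ' : Continuous ⇑ψ⁻¹)
    (hScl : IsClosed (S : Set H)) (hD : IsCompact (D : Set H)) (hDS : D ≤ S)
    (hcover : (S : Set H) ⊆ ⋃ n : ℕ, ⇑(ψ ^ n) '' (D : Set H))
    (hstab : ∀ x ∈ S, ψ x ∈ S) (hstab' : ∀ x ∈ S, ψ⁻¹ x ∈ S) :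
    ∃ O : Set H, IsOpen O ∧ (1 : H) ∈ O ∧ O ∩ S ⊆ D := by
  have hstabn : ∀ (n : ℕ), ∀ x ∈ S, (ψ ^ n) x ∈ S := by
    intro n
    induction n with
    | zero => intro x hx; simpa using hx
    | succ k ih =>
      intro x hx
      have : (ψ ^ (k + 1)) x = ψ ((ψ ^ k) x) := by
        rw [pow_succ']; rfl
      rw [this]; exact hstab _ (ih x hx)
  haveI : LocallyCompactSpace (S : Set H) := hScl.locallyCompactSpace
  haveI : Nonempty (S : Set H) := ⟨⟨1, S.one_mem⟩⟩
  set f : ℕ → Set (S : Set H) := fun n => Subtype.val ⁻¹' (⇑(ψ ^ n) '' (D : Set H)) with hf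
  have hfc : ∀ n, IsClosed (f n) := fun n =>
    ((hD.image (continuous_mulAut_pow hψ n)).isClosed).preimage continuous_subtype_val
  have hfU : ⋃ n, f n = Set.univ := by
    apply Set.eq_univ_of_forall
    intro x
    obtain ⟨s, ⟨n, rfl⟩, hx⟩ := hcover x.2
    exact Set.mem_iUnion.mpr ⟨n, hx⟩
  obtain ⟨n, x, hx⟩ := nonempty_interior_of_iUnion_of_closed hfc hfU
  rw [mem_interior] at hx
  obtain ⟨t, hts, hto, hxt⟩ := hx
  obtain ⟨O₁, hO₁, hO₁t⟩ := isOpen_induced_iff.mp hto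
  set y : H := (ψ⁻¹ ^ n) (x : H) with hy
  have hxfn : (x : H) ∈ ⇑(ψ ^ n) '' (D : Set H) := hts hxt
  have hyD : y ∈ D := by
    rw [mem_image_mulAut] at hxfn
    rw [hy, inv_pow]
    exact hxfn
  have hxO₁ : (x : H) ∈ O₁ := by
    rw [← hO₁t] at hxt; exact hxt
  set O₂ : Set H := ⇑(ψ ^ n) ⁻¹' O₁ with hO₂def
  have hO₂ : IsOpen O₂ := hO₁.preimage (continuous_mulAut_pow hψ n)
  have hyO₂ : y ∈ O₂ := by
    have : (ψ ^ n) y = (x : H) := by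
      simp [hy, inv_pow]
    simpa [hO₂def, this] using hxO₁
  have hO₂S : O₂ ∩ (S : Set H) ⊆ (D : Set H) := by
    rintro z ⟨hz1, hz2⟩
    have hzS : (ψ ^ n) z ∈ S := hstabn n z hz2
    have : (⟨(ψ ^ n) z, hzS⟩ : (S : Set H)) ∈ t := by
      rw [← hO₁t]; exact hz1
    have hmem : (ψ ^ n) z ∈ ⇑(ψ ^ n) '' (D : Set H) := hts this
    rw [mem_image_mulAut] at hmem
    simpa using hmem
  refine ⟨(fun g => y⁻¹ * g) '' O₂, ?_, ⟨y, hyO₂, inv_mul_cancel y⟩, ?_⟩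
  · exact (Homeomorph.mulLeft y⁻¹).isOpenMap O₂ hO₂
  · rintro z ⟨⟨w, hw, rfl⟩, hzS⟩
    have hwS : w ∈ S := by
      have : w = y * (y⁻¹ * w) := by group
      rw [this]
      exact S.mul_mem (hDS hyD) hzS
    have hwD : w ∈ D := hO₂S ⟨hw, hwS⟩
    exact D.mul_mem (D.inv_mem hyD) hwD

end Helpers3

section Helpers4
variable {H : Type*} [Group H]

lemma relindex_map_mulAut (e : MulAut H) (A B : Subgroup H) :
    (A.map (e : H →* H)).relIndex (B.map (e : H →* H)) = A.relIndex B := by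
  rw [← Subgroup.relIndex_comap, Subgroup.comap_map_eq_self_of_injective e.injective]

/-- The index cocycle identity: for commensurable compact open subgroups `X`, `Y`
and an automorphism `f`, `[f(X):X]/[X:f(X)] = [f(Y):Y]/[Y:f(Y)]`. -/
lemma relindex_cocycle (f : MulAut H) (X Y F : Subgroup H)
    (hF1 : F ≤ X ⊓ Y) (hF2 : F ≤ (X ⊓ Y).map (f : H →* H))
    (hnX : F.relIndex X ≠ 0) (hnY : F.relIndex Y ≠ 0)
    (hnfX : F.relIndex (X.map (f : H →* H)) ≠ 0)
    (hnfY : F.relIndex (Y.map (f : H →* H)) ≠ 0) :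
    X.relIndex (X.map (f : H →* H)) * (Y.map (f : H →* H)).relIndex Y
      = Y.relIndex (Y.map (f : H →* H)) * (X.map (f : H →* H)).relIndex X ∧
    X.relIndex (X.map (f : H →* H)) ≠ 0 ∧ Y.relIndex (Y.map (f : H →* H)) ≠ 0 ∧
    (X.map (f : H →* H)).relIndex X ≠ 0 ∧ (Y.map (f : H →* H)).relIndex Y ≠ 0 := by
  set fX := X.map (f : H →* H) with hfX
  set fY := Y.map (f : H →* H) with hfY
  have hFX : F ≤ X := hF1.trans inf_le_left
  have hFY : F ≤ Y := hF1.trans inf_le_right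
  have hFfX : F ≤ fX := hF2.trans (Subgroup.map_mono inf_le_left)
  have hFfY : F ≤ fY := hF2.trans (Subgroup.map_mono inf_le_right)
  set k := F.relIndex (X ⊓ fX) with hk
  set l := F.relIndex (Y ⊓ fY) with hl
  set m := F.relIndex (X ⊓ Y) with hm
  set m' := F.relIndex ((X ⊓ Y).map (f : H →* H)) with hm'
  set a1 := X.relIndex fX with ha1
  set A1 := fX.relIndex X with hA1
  set a2 := Y.relIndex fY with ha2
  set A2 := fY.relIndex Y with hA2
  set rX := (X ⊓ Y).relIndex X with hrX
  set rY := (X ⊓ Y).relIndex Y with hrY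
  have e1 : k * a1 = F.relIndex fX := by
    rw [hk, ha1, ← Subgroup.inf_relIndex_right X fX]
    exact Subgroup.relIndex_mul_relIndex F (X ⊓ fX) fX (le_inf hFX hFfX) inf_le_right
  have e2 : k * A1 = F.relIndex X := by
    rw [hk, hA1, ← Subgroup.inf_relIndex_left X fX]
    exact Subgroup.relIndex_mul_relIndex F (X ⊓ fX) X (le_inf hFX hFfX) inf_le_left
  have e3 : l * a2 = F.relIndex fY := by
    rw [hl, ha2, ← Subgroup.inf_relIndex_right Y fY]
    exact Subgroup.relIndex_mul_relIndex F (Y ⊓ fY) fY (le_inf hFY hFfY) inf_le_right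
  have e4 : l * A2 = F.relIndex Y := by
    rw [hl, hA2, ← Subgroup.inf_relIndex_left Y fY]
    exact Subgroup.relIndex_mul_relIndex F (Y ⊓ fY) Y (le_inf hFY hFfY) inf_le_left
  have e5 : m * rX = F.relIndex X :=
    Subgroup.relIndex_mul_relIndex F (X ⊓ Y) X hF1 inf_le_left
  have e6 : m * rY = F.relIndex Y :=
    Subgroup.relIndex_mul_relIndex F (X ⊓ Y) Y hF1 inf_le_right
  have e7 : m' * rX = F.relIndex fX := by
    rw [hm', hrX, ← relindex_map_mulAut f (X ⊓ Y) X]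
    exact Subgroup.relIndex_mul_relIndex F ((X ⊓ Y).map (f : H →* H)) fX hF2
      (Subgroup.map_mono inf_le_left)
  have e8 : m' * rY = F.relIndex fY := by
    rw [hm', hrY, ← relindex_map_mulAut f (X ⊓ Y) Y]
    exact Subgroup.relIndex_mul_relIndex F ((X ⊓ Y).map (f : H →* H)) fY hF2
      (Subgroup.map_mono inf_le_right)
  have hkne : k ≠ 0 := fun h => hnX (by rw [← e2, h, zero_mul])
  have hlne : l ≠ 0 := fun h => hnY (by rw [← e4, h, zero_mul])
  have ha1ne : a1 ≠ 0 := fun h => hnfX (by rw [← e1, h, mul_zero])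
  have ha2ne : a2 ≠ 0 := fun h => hnfY (by rw [← e3, h, mul_zero])
  have hA1ne : A1 ≠ 0 := fun h => hnX (by rw [← e2, h, mul_zero])
  have hA2ne : A2 ≠ 0 := fun h => hnY (by rw [← e4, h, mul_zero])
  have hmain : (k * l) * (a1 * A2) = (k * l) * (a2 * A1) := by
    have h1 : (k * a1) * (l * A2) = (m' * rX) * (m * rY) := by rw [e1, e4, e7, e6]
    have h2 : (l * a2) * (k * A1) = (m' * rY) * (m * rX) := by rw [e3, e2, e8, e5]
    calc (k * l) * (a1 * A2) = (k * a1) * (l * A2) := by ring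
    _ = (m' * rX) * (m * rY) := h1
    _ = (m' * rY) * (m * rX) := by ring
    _ = (l * a2) * (k * A1) := h2.symm
    _ = (k * l) * (a2 * A1) := by ring
  exact ⟨Nat.eq_of_mul_eq_mul_left (Nat.pos_of_ne_zero (mul_ne_zero hkne hlne)) hmain,
    ha1ne, ha2ne, hA1ne, hA2ne⟩

/-- Coset correspondence: `[f(K):K] = [f(N):N]` when `K ≤ N`, `f(K) ∩ N ≤ K` and
every coset of `N` in `f(N)` is represented by an element of `f(K)`. -/
lemma relindex_map_eq_of_corr (f : MulAut H) (K N : Subgroup H) (hKN : K ≤ N)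
    (hint : K.map (f : H →* H) ⊓ N ≤ K)
    (hsurj : ∀ z ∈ N.map (f : H →* H), ∃ a ∈ K.map (f : H →* H), a⁻¹ * z ∈ N) :
    K.relIndex (K.map (f : H →* H)) = N.relIndex (N.map (f : H →* H)) := by
  set A := K.map (f : H →* H) with hA
  set B := N.map (f : H →* H) with hB
  have hAB : A ≤ B := Subgroup.map_mono hKN
  have hrel : ∀ a b : ↥A, (QuotientGroup.leftRel (K.subgroupOf A)) a b →
      (QuotientGroup.leftRel (N.subgroupOf B)) (Subgroup.inclusion hAB a)
        (Subgroup.inclusion hAB b) := by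
    intro a b hab
    rw [QuotientGroup.leftRel_apply] at hab ⊢
    rw [Subgroup.mem_subgroupOf] at hab ⊢
    have : ((a : H))⁻¹ * (b : H) ∈ K := by simpa using hab
    simpa using hKN this
  set φ : A ⧸ (K.subgroupOf A) → B ⧸ (N.subgroupOf B) :=
    Quotient.map' (Subgroup.inclusion hAB) hrel with hφ
  have hbij : Function.Bijective φ := by
    constructor
    · refine Quotient.ind' fun a => Quotient.ind' fun b => ?_
      intro hab
      rw [hφ, Quotient.map'_mk'', Quotient.map'_mk'', Quotient.eq''] at hab
      rw [Quotient.eq'']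
      rw [QuotientGroup.leftRel_apply, Subgroup.mem_subgroupOf] at hab ⊢
      have hab' : ((a : H))⁻¹ * (b : H) ∈ N := by simpa using hab
      have hmem : ((a : H))⁻¹ * (b : H) ∈ A := by
        have := A.mul_mem (A.inv_mem a.2) b.2
        simpa using this
      have := hint ⟨hmem, hab'⟩
      simpa using this
    · refine Quotient.ind' fun z => ?_
      obtain ⟨a, haA, han⟩ := hsurj (z : H) z.2
      refine ⟨Quotient.mk'' ⟨a, haA⟩, ?_⟩
      rw [hφ, Quotient.map'_mk'', Quotient.eq'']
      rw [QuotientGroup.leftRel_apply, Subgroup.mem_subgroupOf]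
      simpa using han
  exact Nat.card_congr (Equiv.ofBijective φ hbij)

end Helpers4

section Helpers5
variable {H : Type*} [Group H]

lemma pow_apply_succ (α : MulAut H) (m : ℕ) (x : H) : (α ^ (m + 1)) x = (α ^ m) (α x) := by
  rw [pow_succ]; rfl

lemma pow_apply_succ' (α : MulAut H) (m : ℕ) (x : H) : (α ^ (m + 1)) x = α ((α ^ m) x) := by
  rw [pow_succ']; rfl

lemma pow_stab_set {S : Set H} {ψ : MulAut H} (h : ∀ y ∈ S, ψ y ∈ S) (n : ℕ) :
    ∀ x ∈ S, (ψ ^ n) x ∈ S := by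
  induction n with
  | zero => intro x hx; simpa using hx
  | succ k ih =>
    intro x hx
    rw [pow_apply_succ']
    exact h _ (ih x hx)

lemma image_of_stab {S : Set H} {ψ : MulAut H} (h₁ : ∀ x ∈ S, ψ x ∈ S)
    (h₂ : ∀ x ∈ S, ψ⁻¹ x ∈ S) : ⇑ψ '' S = S := by
  ext x
  rw [mem_image_mulAut]
  constructor
  · intro hx
    have := h₁ _ hx
    simpa using this
  · exact h₂ x

lemma negPart_subset {α : MulAut H} {S : Set H} : negPart α S ⊆ S := by
  intro x hx; simpa using mem_negPart.mp hx 0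

lemma posPart_subset {α : MulAut H} {S : Set H} : posPart α S ⊆ S := by
  intro x hx; simpa using mem_posPart.mp hx 0

lemma negPart_mapsto {α : MulAut H} {S : Set H} : ∀ x ∈ negPart α S, α x ∈ negPart α S := by
  intro x hx
  rw [mem_negPart] at hx ⊢
  intro n
  rw [← pow_apply_succ]
  exact hx (n + 1)

lemma posPart_mapsto_inv {α : MulAut H} {S : Set H} :
    ∀ x ∈ posPart α S, α⁻¹ x ∈ posPart α S := by
  intro x hx
  rw [mem_posPart] at hx ⊢
  intro n
  rw [← pow_apply_succ]
  exact hx (n + 1)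

lemma mmPart_mapsto {α : MulAut H} {S : Set H} : ∀ x ∈ mmPart α S, α x ∈ mmPart α S := by
  intro x hx
  rw [mem_mmPart] at hx ⊢
  obtain ⟨n, hn⟩ := hx
  refine ⟨n, fun m hm => ?_⟩
  rw [← pow_apply_succ]
  exact hn (m + 1) (le_trans hm (Nat.le_succ m))

lemma mmPart_mapsto_inv {α : MulAut H} {S : Set H} :
    ∀ x ∈ mmPart α S, α⁻¹ x ∈ mmPart α S := by
  intro x hx
  rw [mem_mmPart] at hx ⊢
  obtain ⟨n, hn⟩ := hx
  refine ⟨n + 1, fun m hm => ?_⟩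
  obtain ⟨k, rfl⟩ : ∃ k, m = k + 1 := ⟨m - 1, by omega⟩
  have : (α ^ (k + 1)) (α⁻¹ x) = (α ^ k) x := by
    rw [pow_apply_succ]
    simp
  rw [this]
  exact hn k (by omega)

lemma image_mmPart (α : MulAut H) (S : Set H) : ⇑α '' mmPart α S = mmPart α S :=
  image_of_stab mmPart_mapsto mmPart_mapsto_inv

end Helpers5

/-- If `α` is tidy and `V` is tidy for `α`, then `V₋₋` is a closed
`α`-stable subgroup of `G` contained in `P_α`, and `s_G(α⁻¹) = s_{V₋₋}(α⁻¹|_{V₋₋})`: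
for `W` a compact open subgroup of `V₋₋` tidy for `α⁻¹|_{V₋₋}`, with
`W' = ⋂_{n≥0} α^{-n}(W)`, the indices `[α⁻¹(V₋) : V₋]` and `[α⁻¹(W') : W']` are
finite and equal. -/
theorem scale_inv_eq_scale_on_mmPart
    {G : Type*} [Group G] [TopologicalSpace G] [IsTopologicalGroup G]
    [T2Space G] [LocallyCompactSpace G] [TotallyDisconnectedSpace G]
    (α : MulAut G) (hc : Continuous ⇑α) (hc' : Continuous ⇑α⁻¹)
    (hα : IsTidy α) (V : Subgroup G) (hV : IsTidyFor α V) :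
    IsClosed (mmPart α (V : Set G)) ∧
    (1 : G) ∈ mmPart α (V : Set G) ∧
    (∀ x ∈ mmPart α (V : Set G), ∀ y ∈ mmPart α (V : Set G),
      x * y⁻¹ ∈ mmPart α (V : Set G)) ∧
    ⇑α '' mmPart α (V : Set G) = mmPart α (V : Set G) ∧
    mmPart α (V : Set G) ⊆ parSet α ∧
    ∀ W : Subgroup G, IsTidyForIn α⁻¹ (mmPart α (V : Set G)) W →
      idx α (negSubgroup α V) ≠ 0 ∧ idx α (negSubgroup α W) ≠ 0 ∧
        idx α (negSubgroup α V) = idx α (negSubgroup α W) := by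
  obtain ⟨hVc, hVo, hVt1, hVpp, hVmm⟩ := hV
  have hcinv : Continuous ⇑(α⁻¹)⁻¹ := by simpa [inv_inv] using hc
  set M : Set G := mmPart α (V : Set G) with hM
  set Msub : Subgroup G := mmSubgroup α V with hMsub
  have hMcoe : (Msub : Set G) = M := rfl
  -- Part 1
  have hMclosed : IsClosed M := hVmm
  -- Part 2
  have h1M : (1 : G) ∈ M := Msub.one_mem
  -- Part 3
  have hmulM : ∀ x ∈ M, ∀ y ∈ M, x * y⁻¹ ∈ M := fun x hx y hy =>
    Msub.mul_mem hx (Msub.inv_mem hy)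
  -- Part 4
  have himM : ⇑α '' M = M := image_mmPart α (V : Set G)
  -- Part 5
  have hparM : M ⊆ parSet α := by
    intro x hx
    obtain ⟨n, hn⟩ := mem_mmPart.mp hx
    set K : Set G := (⋃ k ∈ Finset.range n, {(α ^ k) x}) ∪ (V : Set G) with hK
    have hKc : IsCompact K := by
      refine IsCompact.union ?_ hVc
      refine Set.Finite.isCompact ?_
      exact Set.Finite.biUnion (Finset.range n).finite_toSet fun k _ => Set.finite_singleton _
    have hrange : Set.range (fun k : ℕ => (α ^ k) x) ⊆ K := by
      rintro _ ⟨k, rfl⟩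
      rcases lt_or_ge k n with h | h
      · exact Set.mem_union_left _ <| Set.mem_biUnion (Finset.mem_range.mpr h) rfl
      · exact Set.mem_union_right _ (hn k h)
    exact IsCompact.of_isClosed_subset hKc isClosed_closure
      (closure_minimal hrange hKc.isClosed)
  refine ⟨hMclosed, h1M, hmulM, himM, hparM, ?_⟩
  -- Part 6
  intro W hW
  obtain ⟨hWM, hWc, hWo, hWt1, hWpp, hWmm⟩ := hW
  -- basic stability of M
  have hMst : ∀ x ∈ M, α x ∈ M := fun x hx => mmPart_mapsto x hx
  have hMst' : ∀ x ∈ M, α⁻¹ x ∈ M := fun x hx => mmPart_mapsto_inv x hx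
  have hinvinv : (α⁻¹)⁻¹ = α := inv_inv α
  -- V₋ as a subgroup
  set Vn : Subgroup G := negSubgroup α V with hVndef
  have hVncoe : (Vn : Set G) = negPart α (V : Set G) := coe_negSubgroup α V
  have hVnc : IsCompact (Vn : Set G) := by rw [hVncoe]; exact isCompact_negPart hc' hVc
  have hVnM : (Vn : Set G) ⊆ M := by
    intro x hx
    rw [hVncoe] at hx
    exact mem_mmPart.mpr ⟨0, fun m _ => mem_negPart.mp hx m⟩
  have hVnst : ∀ x ∈ Vn, α x ∈ Vn := by
    intro x hx
    rw [mem_negSubgroup] at hx ⊢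
    intro n
    rw [← pow_apply_succ]
    exact hx (n + 1)
  have hcoverM : (Msub : Set G) ⊆ ⋃ n : ℕ, ⇑(α⁻¹ ^ n) '' (Vn : Set G) := by
    intro x hx
    obtain ⟨n, hn⟩ := mem_mmPart.mp (show x ∈ mmPart α (V : Set G) from hx)
    refine Set.mem_iUnion.mpr ⟨n, ?_⟩
    rw [mem_image_mulAut, ← inv_pow, inv_inv]
    rw [SetLike.mem_coe, mem_negSubgroup]
    intro k
    rw [pow_apply_add]
    exact hn (k + n) (Nat.le_add_left n k)
  -- Baire: V₋ is relatively open in M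
  obtain ⟨OV, hOVo, hOV1, hOVsub⟩ :=
    exists_isOpen_inter_subset (S := Msub) (D := Vn) α⁻¹ hc' hcinv hMclosed hVnc
      (fun x hx => hVnM hx) hcoverM
      (fun x hx => hMst' x hx) (fun x hx => by rw [inv_inv]; exact hMst x hx)
  -- the subgroup T = W₋₋ (for α⁻¹) inside M
  set Tsub : Subgroup G := mmSubgroup α⁻¹ W with hTdef
  have hTcoe : (Tsub : Set G) = mmPart α⁻¹ (W : Set G) := rfl
  have hTM : (Tsub : Set G) ⊆ M := by
    intro x hx
    obtain ⟨n, hn⟩ := mem_mmPart.mp (show x ∈ mmPart α⁻¹ (W : Set G) from hx)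
    have h1 : (α⁻¹ ^ n) x ∈ M := hWM (hn n le_rfl)
    have h2 : (α ^ n) ((α⁻¹ ^ n) x) = x := by simp [inv_pow]
    have := pow_stab_set hMst n _ h1
    rwa [h2] at this
  have hTstab : ∀ x ∈ (Tsub : Set G), α⁻¹ x ∈ Tsub := fun x hx =>
    mmPart_mapsto (α := α⁻¹) x hx
  have hTstab' : ∀ x ∈ (Tsub : Set G), α x ∈ Tsub := fun x hx => by
    have := mmPart_mapsto_inv (α := α⁻¹) x hx
    rwa [hinvinv] at this
  have hTim : ⇑α '' (Tsub : Set G) = (Tsub : Set G) :=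
    image_of_stab hTstab' (fun x hx => hTstab x hx)
  have hTclosed : IsClosed (Tsub : Set G) := by
    have h1 : (Tsub : Set G)
        = Subtype.val '' ((Subtype.val ⁻¹' (mmPart α⁻¹ (W : Set G))) : Set M) := by
      rw [Set.image_preimage_eq_inter_range, Subtype.range_val]
      exact (Set.inter_eq_self_of_subset_left hTM).symm
    rw [h1]
    exact hMclosed.isClosedEmbedding_subtypeVal.isClosedMap _ hWmm
  -- W₊ = ⋂ αⁿ(W) and W' = ⋂ α⁻ⁿ(W)
  set Wp : Subgroup G := posSubgroup α W with hWpdef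
  set Wn : Subgroup G := negSubgroup α W with hWndef
  have hWpc : IsCompact (Wp : Set G) := by
    rw [coe_posSubgroup]; exact isCompact_posPart hc hWc
  have hWnW : Wn ≤ W := fun x hx => by simpa using mem_negSubgroup.mp hx 0
  have hWpW : Wp ≤ W := fun x hx => by simpa using mem_posSubgroup.mp hx 0
  have hWnst : ∀ x ∈ Wn, α x ∈ Wn := by
    intro x hx
    rw [mem_negSubgroup] at hx ⊢
    intro n
    rw [← pow_apply_succ]
    exact hx (n + 1)
  have hWpst' : ∀ x ∈ Wp, α⁻¹ x ∈ Wp := by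
    intro x hx
    rw [mem_posSubgroup] at hx ⊢
    intro n
    rw [← pow_apply_succ]
    exact hx (n + 1)
  have hT1 : (W : Set G) = (Wn : Set G) * (Wp : Set G) := by
    rw [coe_negSubgroup, coe_posSubgroup, ← posPart_inv, ← negPart_inv]
    exact hWt1
  have hWpT : Wp ≤ Tsub := by
    intro x hx
    exact mem_mmPart.mpr ⟨0, fun m _ => mem_posSubgroup.mp hx m⟩
  have hcoverT : (Tsub : Set G) ⊆ ⋃ n : ℕ, ⇑(α ^ n) '' (Wp : Set G) := by
    intro x hx
    obtain ⟨n, hn⟩ := mem_mmPart.mp (show x ∈ mmPart α⁻¹ (W : Set G) from hx)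
    refine Set.mem_iUnion.mpr ⟨n, ?_⟩
    rw [mem_image_mulAut, ← inv_pow]
    rw [SetLike.mem_coe, mem_posSubgroup]
    intro k
    rw [pow_apply_add]
    exact hn (k + n) (Nat.le_add_left n k)
  -- Baire: W₊ is relatively open in T
  obtain ⟨OP, hOPo, hOP1, hOPsub⟩ :=
    exists_isOpen_inter_subset (S := Tsub) (D := Wp) α hc hc' hTclosed hWpc
      hWpT hcoverT hTstab' hTstab
  -- W is relatively open in M: extract an open set of G
  obtain ⟨OW, hOWo, hOWpre⟩ := isOpen_induced_iff.mp hWo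
  have hOWeq : OW ∩ M = (W : Set G) := by
    ext x
    constructor
    · rintro ⟨h1, h2⟩
      have : (⟨x, h2⟩ : M) ∈ Subtype.val ⁻¹' OW := h1
      rw [hOWpre] at this
      exact this
    · intro hx
      have h2 : x ∈ M := hWM hx
      have : (⟨x, h2⟩ : M) ∈ Subtype.val ⁻¹' (W : Set G) := hx
      rw [← hOWpre] at this
      exact ⟨this, h2⟩
  have hOW1 : (1 : G) ∈ OW := by
    have : (1 : G) ∈ OW ∩ M := by rw [hOWeq]; exact W.one_mem
    exact this.1
  -- First cocycle application (inside T, with f = α): α(W₊) = W₊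
  set X1 : Subgroup G := Wp with hX1def
  set Y1 : Subgroup G := Vn ⊓ Tsub with hY1def
  set F1 : Subgroup G := (X1 ⊓ Y1) ⊓ (X1 ⊓ Y1).map (α : G →* G) with hF1def
  have hX1le : X1 ≤ X1.map (α : G →* G) := by
    intro x hx
    rw [mem_map_mulAut]
    exact hWpst' x hx
  have hY1mle : Y1.map (α : G →* G) ≤ Y1 := by
    intro x hx
    rw [mem_map_mulAut] at hx
    obtain ⟨h1, h2⟩ := Subgroup.mem_inf.mp hx
    refine Subgroup.mem_inf.mpr ⟨?_, ?_⟩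
    · have := hVnst _ h1
      simpa using this
    · have := hTstab' _ h2
      simpa using this
  have hY1c : IsCompact (Y1 : Set G) := by
    rw [hY1def, Subgroup.coe_inf]
    exact hVnc.inter_right hTclosed
  have hX1T : (X1 : Set G) ⊆ (Tsub : Set G) := fun x hx => hWpT hx
  have hY1T : (Y1 : Set G) ⊆ (Tsub : Set G) := by
    rw [hY1def, Subgroup.coe_inf]
    exact Set.inter_subset_right
  have hfX1c : IsCompact ((X1.map (α : G →* G)) : Set G) := by
    rw [coe_map_mulAut]; exact hWpc.image hc
  have hfY1c : IsCompact ((Y1.map (α : G →* G)) : Set G) := by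
    rw [coe_map_mulAut]; exact hY1c.image hc
  have hfX1T : ((X1.map (α : G →* G)) : Set G) ⊆ (Tsub : Set G) := by
    rw [coe_map_mulAut]
    have : ⇑α '' (X1 : Set G) ⊆ ⇑α '' (Tsub : Set G) := Set.image_mono hX1T
    rwa [hTim] at this
  have hfY1T : ((Y1.map (α : G →* G)) : Set G) ⊆ (Tsub : Set G) := by
    rw [coe_map_mulAut]
    have : ⇑α '' (Y1 : Set G) ⊆ ⇑α '' (Tsub : Set G) := Set.image_mono hY1T
    rwa [hTim] at this
  set OF1 : Set G := (OP ∩ OV) ∩ (⇑α '' (OP ∩ OV)) with hOF1def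
  have hOF1o : IsOpen OF1 :=
    (hOPo.inter hOVo).inter (isOpen_image_mulAut hc' (hOPo.inter hOVo))
  have hOF11 : (1 : G) ∈ OF1 := by
    refine ⟨⟨hOP1, hOV1⟩, ?_⟩
    rw [mem_image_mulAut]
    simpa using And.intro hOP1 hOV1
  have hOF1T : OF1 ∩ (Tsub : Set G) ⊆ (F1 : Set G) := by
    rintro x ⟨⟨⟨hxOP, hxOV⟩, hxim⟩, hxT⟩
    have hxX1 : x ∈ X1 := hOPsub ⟨hxOP, hxT⟩
    have hxVn : x ∈ Vn := hOVsub ⟨hxOV, hTM hxT⟩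
    have hax : α⁻¹ x ∈ OP ∩ OV := (mem_image_mulAut _).mp hxim
    have haxT : α⁻¹ x ∈ (Tsub : Set G) := hTstab x hxT
    have haxX1 : α⁻¹ x ∈ X1 := hOPsub ⟨hax.1, haxT⟩
    have haxVn : α⁻¹ x ∈ Vn := hOVsub ⟨hax.2, hTM haxT⟩
    refine Subgroup.mem_inf.mpr ⟨Subgroup.mem_inf.mpr ⟨hxX1, Subgroup.mem_inf.mpr ⟨hxVn, hxT⟩⟩, ?_⟩
    rw [mem_map_mulAut]
    exact Subgroup.mem_inf.mpr ⟨haxX1, Subgroup.mem_inf.mpr ⟨haxVn, haxT⟩⟩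
  have hn1 : F1.relIndex X1 ≠ 0 :=
    relindex_ne_zero_of_compact hWpc hOF1o hOF11 (fun x hx => hOF1T ⟨hx.1, hX1T hx.2⟩)
  have hn2 : F1.relIndex Y1 ≠ 0 :=
    relindex_ne_zero_of_compact hY1c hOF1o hOF11 (fun x hx => hOF1T ⟨hx.1, hY1T hx.2⟩)
  have hn3 : F1.relIndex (X1.map (α : G →* G)) ≠ 0 :=
    relindex_ne_zero_of_compact hfX1c hOF1o hOF11 (fun x hx => hOF1T ⟨hx.1, hfX1T hx.2⟩)
  have hn4 : F1.relIndex (Y1.map (α : G →* G)) ≠ 0 :=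
    relindex_ne_zero_of_compact hfY1c hOF1o hOF11 (fun x hx => hOF1T ⟨hx.1, hfY1T hx.2⟩)
  obtain ⟨hcoc1, _, _, _, _⟩ :=
    relindex_cocycle α X1 Y1 F1 inf_le_left inf_le_right hn1 hn2 hn3 hn4
  have h5 : (X1.map (α : G →* G)).relIndex X1 = 1 := Subgroup.relIndex_eq_one.mpr hX1le
  have h6 : Y1.relIndex (Y1.map (α : G →* G)) = 1 := Subgroup.relIndex_eq_one.mpr hY1mle
  rw [h5, h6, one_mul] at hcoc1
  have hWmfix : X1.map (α : G →* G) = X1 := by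
    have h7 : X1.relIndex (X1.map (α : G →* G)) = 1 := Nat.eq_one_of_mul_eq_one_right hcoc1
    exact le_antisymm (Subgroup.relIndex_eq_one.mp h7) hX1le
  -- set versions of α(W₊) = W₊
  have hWpim : ⇑α '' (Wp : Set G) = (Wp : Set G) := by
    rw [← coe_map_mulAut]
    exact congrArg _ hWmfix
  have hWpst : ∀ x ∈ Wp, α x ∈ Wp := by
    intro x hx
    have : α x ∈ ⇑α '' (Wp : Set G) := ⟨x, hx, rfl⟩
    rwa [hWpim] at this
  have hWpim' : ⇑α⁻¹ '' (Wp : Set G) = (Wp : Set G) :=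
    image_of_stab hWpst' (fun x hx => by
      rw [hinvinv]
      exact hWpst x hx)
  -- W ≤ α⁻¹(W)
  have hWle : W ≤ W.map ((α⁻¹ : MulAut G) : G →* G) := by
    intro x hx
    rw [mem_map_mulAut, hinvinv]
    have hx' : x ∈ (Wn : Set G) * (Wp : Set G) := by rw [← hT1]; exact hx
    obtain ⟨a, ha, b, hb, rfl⟩ := Set.mem_mul.mp hx'
    rw [map_mul]
    exact W.mul_mem (hWnW (hWnst a ha)) (hWpW (hWpst b hb))
  -- V₋ ≤ α⁻¹(V₋)
  have hVnle : Vn ≤ Vn.map ((α⁻¹ : MulAut G) : G →* G) := by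
    intro x hx
    rw [mem_map_mulAut, hinvinv]
    exact hVnst x hx
  -- the coset correspondence between [α⁻¹(W') : W'] and [α⁻¹(W) : W]
  have hintA : Wn.map ((α⁻¹ : MulAut G) : G →* G) ⊓ W ≤ Wn := by
    intro x hx
    obtain ⟨h1, h2⟩ := Subgroup.mem_inf.mp hx
    rw [mem_map_mulAut, hinvinv] at h1
    rw [mem_negSubgroup] at h1 ⊢
    intro n
    cases n with
    | zero => simpa using h2
    | succ k =>
      rw [pow_apply_succ]
      exact h1 k
  have hsurjA : ∀ z ∈ W.map ((α⁻¹ : MulAut G) : G →* G),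
      ∃ a ∈ Wn.map ((α⁻¹ : MulAut G) : G →* G), a⁻¹ * z ∈ W := by
    intro z hz
    rw [mem_map_mulAut, hinvinv] at hz
    have hz' : α z ∈ (Wn : Set G) * (Wp : Set G) := by rw [← hT1]; exact hz
    obtain ⟨a₀, ha₀, b₀, hb₀, heq⟩ := Set.mem_mul.mp hz'
    refine ⟨α⁻¹ a₀, ?_, ?_⟩
    · rw [mem_map_mulAut, hinvinv]
      simpa using ha₀
    · have he1 : (α⁻¹ a₀)⁻¹ * z = α⁻¹ (a₀⁻¹ * α z) := by
        rw [map_mul, map_inv]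
        simp
      rw [he1, ← heq]
      have he2 : a₀⁻¹ * (a₀ * b₀) = b₀ := by group
      rw [he2]
      have : α⁻¹ b₀ ∈ ⇑α⁻¹ '' (Wp : Set G) := ⟨b₀, hb₀, rfl⟩
      rw [hWpim'] at this
      exact hWpW this
  have hclaimA : Wn.relIndex (Wn.map ((α⁻¹ : MulAut G) : G →* G))
      = W.relIndex (W.map ((α⁻¹ : MulAut G) : G →* G)) :=
    relindex_map_eq_of_corr α⁻¹ Wn W hWnW hintA hsurjA
  -- Second cocycle application (inside M, with f = α⁻¹)
  set F2 : Subgroup G := (W ⊓ Vn) ⊓ (W ⊓ Vn).map ((α⁻¹ : MulAut G) : G →* G) with hF2def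
  have hWM' : (W : Set G) ⊆ M := hWM
  have hfWc : IsCompact ((W.map ((α⁻¹ : MulAut G) : G →* G)) : Set G) := by
    rw [coe_map_mulAut]; exact hWc.image hc'
  have hfVnc : IsCompact ((Vn.map ((α⁻¹ : MulAut G) : G →* G)) : Set G) := by
    rw [coe_map_mulAut]; exact hVnc.image hc'
  have hMim' : ⇑α⁻¹ '' M = M :=
    image_of_stab hMst' (fun x hx => by rw [hinvinv]; exact hMst x hx)
  have hfWM : ((W.map ((α⁻¹ : MulAut G) : G →* G)) : Set G) ⊆ M := by
    rw [coe_map_mulAut]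
    have : ⇑α⁻¹ '' (W : Set G) ⊆ ⇑α⁻¹ '' M := Set.image_mono hWM'
    rwa [hMim'] at this
  have hfVnM : ((Vn.map ((α⁻¹ : MulAut G) : G →* G)) : Set G) ⊆ M := by
    rw [coe_map_mulAut]
    have : ⇑α⁻¹ '' (Vn : Set G) ⊆ ⇑α⁻¹ '' M := Set.image_mono hVnM
    rwa [hMim'] at this
  set OF2 : Set G := (OW ∩ OV) ∩ (⇑α⁻¹ '' (OW ∩ OV)) with hOF2def
  have hOF2o : IsOpen OF2 :=
    (hOWo.inter hOVo).inter (isOpen_image_mulAut hcinv (hOWo.inter hOVo))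
  have hOF21 : (1 : G) ∈ OF2 := by
    refine ⟨⟨hOW1, hOV1⟩, ?_⟩
    rw [mem_image_mulAut]
    simpa using And.intro hOW1 hOV1
  have hOF2M : OF2 ∩ M ⊆ (F2 : Set G) := by
    rintro x ⟨⟨⟨hxOW, hxOV⟩, hxim⟩, hxM⟩
    have hxW : x ∈ W := by
      have h' : x ∈ OW ∩ M := ⟨hxOW, hxM⟩
      rw [hOWeq] at h'
      exact h'
    have hxVn : x ∈ Vn := hOVsub ⟨hxOV, hxM⟩
    have hax : (α⁻¹)⁻¹ x ∈ OW ∩ OV := (mem_image_mulAut _).mp hxim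
    rw [hinvinv] at hax
    have haxM : α x ∈ M := hMst x hxM
    have haxW : α x ∈ W := by
      have h' : α x ∈ OW ∩ M := ⟨hax.1, haxM⟩
      rw [hOWeq] at h'
      exact h'
    have haxVn : α x ∈ Vn := hOVsub ⟨hax.2, haxM⟩
    refine Subgroup.mem_inf.mpr ⟨Subgroup.mem_inf.mpr ⟨hxW, hxVn⟩, ?_⟩
    rw [mem_map_mulAut, hinvinv]
    exact Subgroup.mem_inf.mpr ⟨haxW, haxVn⟩
  have hm1 : F2.relIndex W ≠ 0 :=
    relindex_ne_zero_of_compact hWc hOF2o hOF21 (fun x hx => hOF2M ⟨hx.1, hWM' hx.2⟩)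
  have hm2 : F2.relIndex Vn ≠ 0 :=
    relindex_ne_zero_of_compact hVnc hOF2o hOF21 (fun x hx => hOF2M ⟨hx.1, hVnM hx.2⟩)
  have hm3 : F2.relIndex (W.map ((α⁻¹ : MulAut G) : G →* G)) ≠ 0 :=
    relindex_ne_zero_of_compact hfWc hOF2o hOF21 (fun x hx => hOF2M ⟨hx.1, hfWM hx.2⟩)
  have hm4 : F2.relIndex (Vn.map ((α⁻¹ : MulAut G) : G →* G)) ≠ 0 :=
    relindex_ne_zero_of_compact hfVnc hOF2o hOF21 (fun x hx => hOF2M ⟨hx.1, hfVnM hx.2⟩)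
  obtain ⟨hcoc2, hane, hbne, _, _⟩ :=
    relindex_cocycle α⁻¹ W Vn F2 inf_le_left inf_le_right hm1 hm2 hm3 hm4
  have h8 : (W.map ((α⁻¹ : MulAut G) : G →* G)).relIndex W = 1 :=
    Subgroup.relIndex_eq_one.mpr hWle
  have h9 : (Vn.map ((α⁻¹ : MulAut G) : G →* G)).relIndex Vn = 1 :=
    Subgroup.relIndex_eq_one.mpr hVnle
  rw [h8, h9, mul_one, mul_one] at hcoc2
  -- conclusion
  refine ⟨?_, ?_, ?_⟩
  · exact hbne
  · show (negSubgroup α W).relIndex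
      ((negSubgroup α W).map ((α⁻¹ : MulAut G) : G →* G)) ≠ 0
    rw [← hWndef, hclaimA]
    exact hane
  · show (negSubgroup α V).relIndex
        ((negSubgroup α V).map ((α⁻¹ : MulAut G) : G →* G))
      = (negSubgroup α W).relIndex
        ((negSubgroup α W).map ((α⁻¹ : MulAut G) : G →* G))
    rw [← hVndef, ← hWndef, hclaimA, ← hcoc2]
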